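/- For every positive integer n with n ∉ {1, 2, 4, 6}: if n is odd, there exists a triple (a,b,c) of positive odd integers with a + b + c = n and gcd(a,b,c) = 1; if n is even, there exists a triple (a,b,c) of positive integers with a + b + c = n/2, gcd(a,b,c) = 1, and abc even. -/
import Mathlib

/-- For every positive integer `n ∉ {1,2,4,6}`: if `n` is odd there is a primitive
triple of positive odd integers of degree `n` (signature 1); if `n` is even there is
a primitive triple of positive integers of degree `n/2` with `abc` even (signature 0). -/
theorem stmt11 (n : ℕ) (hn : 0 < n) (h : n ∉ ({1, 2, 4, 6} : Set ℕ)) :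
    (Odd n → ∃ a b c : ℕ, 0 < a ∧ 0 < b ∧ 0 < c ∧
      Odd a ∧ Odd b ∧ Odd c ∧ a + b + c = n ∧ Nat.gcd a (Nat.gcd b c) = 1) ∧
    (Even n → ∃ a b c : ℕ, 0 < a ∧ 0 < b ∧ 0 < c ∧
      a + b + c = n / 2 ∧ Nat.gcd a (Nat.gcd b c) = 1 ∧ Even (a * b * c)) := by
  simp only [Set.mem_insert_iff, Set.mem_singleton_iff, not_or] at h
  obtain ⟨h1, h2, h4, h6⟩ := h
  constructor
  · intro hodd
    have h3 : 3 ≤ n := by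
      rcases hodd with ⟨k, hk⟩; omega
    refine ⟨1, 1, n - 2, one_pos, one_pos, by omega, odd_one, odd_one, ?_, by omega, by simp⟩
    rcases hodd with ⟨k, hk⟩
    exact ⟨k - 1, by omega⟩
  · intro heven
    have h8 : 8 ≤ n := by
      rcases heven with ⟨k, hk⟩; omega
    refine ⟨1, 2, n / 2 - 3, one_pos, by omega, by omega, by omega, by simp, ?_⟩
    exact ⟨1 * (n / 2 - 3), by ring⟩
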